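/- Let A be the 6×6 block matrix of the reduced cell-centered Stokes–Biot system (as assembled in the paper), whose quadratic form on a vector q = (w_p, ψ, φ, ξ, v_f, v_s) decomposes as qᵗ A q = w_pᵗ(A_{pp} − A_{σp}A_{σσ}^{-1}A_{σp}ᵗ)w_p + w_pᵗ A_{pγ}A_{γγ}^{-1}A_{pγ}ᵗ w_p + (A_{up}ᵗ w_p + A_{uλ}ᵗ ξ)ᵗ A_{uu}^{-1}(A_{up}ᵗ w_p + A_{uλ}ᵗ ξ) + (ψᵗ φᵗ) C (ψ;φ) + two Schur-complement quadratic terms in (ψ, v_f) and (φ, v_s). If (a) A_{uu}, A_{σσ}, A_{γγ} are symmetric positive definite; (b) the matrix [[A_{σσ}, A_{σp}ᵗ],[A_{σp}, A_{pp}]] is positive semidefinite; (c) C is positive semidefinite; (d) the map (w_p, ξ) ↦ A_{up}ᵗ w_p + A_{uλ}ᵗ ξ is injective; and (e) the maps (ψ, v_f, χ_f) ↦ A_{σφ}ᵗψ + A_{σu}ᵗ v_f + A_{σγ}ᵗ χ_f and its poroelastic analogue are injective; then A is positive definite. -/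

import Mathlib

/-!
Every term of the decomposition of `qᵀ A q` is a nonnegative quadratic form: the pressure term
is the Schur complement of the positive semidefinite block matrix in (b), and each `schurQuad`
term equals `‖(1 - Π) u‖²_W`, where `Π` is the `W`-orthogonal projection onto the range of `Gᵀ`
and `u = Pᵀ ψ + Uᵀ v`. Since `(1 - Π) u = Pᵀ ψ + Uᵀ v + Gᵀ χ` for some `χ`, the injectivity
hypotheses make the velocity term, resp. one of the two Schur terms, strictly positive as soon
as `(w, ξ)`, resp. `(ψ, v_f)` or `(φ, v_s)`, is nonzero.
-/

open Matrix

/-- Schur-complement quadratic form in `(ψ, v)` obtained after eliminating the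
third (vorticity/rotation) variable from the 3×3 block matrix whose blocks are
`X * W * Yᵀ` for `X, Y ∈ {P, U, G}`. -/
noncomputable def schurQuad {a b c s : ℕ}
    (W : Matrix (Fin s) (Fin s) ℝ)
    (P : Matrix (Fin a) (Fin s) ℝ) (U : Matrix (Fin b) (Fin s) ℝ)
    (G : Matrix (Fin c) (Fin s) ℝ)
    (ψ : Fin a → ℝ) (v : Fin b → ℝ) : ℝ :=
  ψ ⬝ᵥ ((P * W * Pᵀ - P * W * Gᵀ * (G * W * Gᵀ)⁻¹ * (G * W * Pᵀ)) *ᵥ ψ)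
    + 2 * (ψ ⬝ᵥ ((P * W * Uᵀ - P * W * Gᵀ * (G * W * Gᵀ)⁻¹ * (G * W * Uᵀ)) *ᵥ v))
    + v ⬝ᵥ ((U * W * Uᵀ - U * W * Gᵀ * (G * W * Gᵀ)⁻¹ * (G * W * Uᵀ)) *ᵥ v)

section QuadraticForms

variable {m n X : Type*} [Fintype m] [Fintype n]

lemma Matrix.PosSemidef.dotProduct_mulVec_nonneg' {M : Matrix n n ℝ} (hM : M.PosSemidef)
    (x : n → ℝ) : 0 ≤ x ⬝ᵥ (M *ᵥ x) := by
  simpa using hM.dotProduct_mulVec_nonneg x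

lemma Matrix.PosSemidef.mul_mul_transpose_same {A : Matrix n n ℝ} (hA : A.PosSemidef)
    (B : Matrix m n ℝ) : (B * A * Bᵀ).PosSemidef := by
  simpa using hA.mul_mul_conjTranspose_same B

lemma Matrix.PosDef.dotProduct_mulVec_pos_of_injective [Zero X] {M : Matrix n n ℝ}
    (hM : M.PosDef) {f : X → n → ℝ} (hf : Function.Injective f) (hf0 : f 0 = 0) {x : X}
    (hx : x ≠ 0) : 0 < f x ⬝ᵥ (M *ᵥ f x) := by
  simpa using hM.dotProduct_mulVec_pos ((hf.ne_iff' hf0).mpr hx)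

lemma transpose_mulVec_dotProduct (M : Matrix m n ℝ) (x : m → ℝ) (y : n → ℝ) :
    (Mᵀ *ᵥ x) ⬝ᵥ y = x ⬝ᵥ (M *ᵥ y) := by
  rw [dotProduct_mulVec, mulVec_transpose]

lemma dotProduct_mulVec_transpose_add {a b : Type*} [Fintype a] [Fintype b]
    {S : Matrix n n ℝ} (hS : Sᵀ = S) (P : Matrix a n ℝ) (U : Matrix b n ℝ)
    (ψ : a → ℝ) (v : b → ℝ) :
    (Pᵀ *ᵥ ψ + Uᵀ *ᵥ v) ⬝ᵥ (S *ᵥ (Pᵀ *ᵥ ψ + Uᵀ *ᵥ v)) =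
      ψ ⬝ᵥ ((P * S * Pᵀ) *ᵥ ψ) + 2 * (ψ ⬝ᵥ ((P * S * Uᵀ) *ᵥ v)) + v ⬝ᵥ ((U * S * Uᵀ) *ᵥ v) := by
  simp only [mulVec_add, dotProduct_add, add_dotProduct, transpose_mulVec_dotProduct,
    mulVec_mulVec, ← Matrix.mul_assoc]
  have hcross : v ⬝ᵥ ((U * S * Pᵀ) *ᵥ ψ) = ψ ⬝ᵥ ((P * S * Uᵀ) *ᵥ v) := by
    rw [← transpose_mulVec_dotProduct, dotProduct_comm]
    simp [Matrix.mul_assoc, hS]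
  rw [hcross]
  ring

lemma Matrix.PosSemidef.sub_mul_inv_mul_transpose_of_fromBlocks [DecidableEq m]
    {A : Matrix m m ℝ} {B : Matrix n m ℝ} {D : Matrix n n ℝ} (hA : A.PosDef)
    (h : (fromBlocks A Bᵀ B D).PosSemidef) : (D - B * A⁻¹ * Bᵀ).PosSemidef := by
  let := hA.isUnit.invertible
  simpa using (PosDef.fromBlocks₁₁ Bᵀ D hA).mp (by simpa using h)

end QuadraticForms

section OrthProj

variable {n k : Type*} [Fintype n] [Fintype k] [DecidableEq k]

/-- For `W` positive definite this is the `W`-orthogonal projection onto the range of `Gᵀ`. -/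
noncomputable def orthProj (W : Matrix n n ℝ) (G : Matrix k n ℝ) : Matrix n n ℝ :=
  Gᵀ * (G * W * Gᵀ)⁻¹ * G * W

lemma orthProj_mul_self {W : Matrix n n ℝ} {G : Matrix k n ℝ} (hD : IsUnit (G * W * Gᵀ).det) :
    orthProj W G * orthProj W G = orthProj W G := by
  calc orthProj W G * orthProj W G
      = Gᵀ * ((G * W * Gᵀ)⁻¹ * (G * W * Gᵀ)) * (G * W * Gᵀ)⁻¹ * G * W := by
        simp only [orthProj, Matrix.mul_assoc]
    _ = orthProj W G := by rw [nonsing_inv_mul _ hD, Matrix.mul_one, orthProj]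

lemma transpose_orthProj_mul {W : Matrix n n ℝ} (hW : Wᵀ = W) (G : Matrix k n ℝ) :
    (orthProj W G)ᵀ * W = W * orthProj W G := by
  have hDinv : ((G * W * Gᵀ)⁻¹)ᵀ = (G * W * Gᵀ)⁻¹ := by
    rw [transpose_nonsing_inv]
    simp [Matrix.mul_assoc, hW]
  simp only [orthProj, transpose_mul, transpose_transpose, hW]
  rw [hDinv]
  simp only [Matrix.mul_assoc]

lemma transpose_one_sub_orthProj_mul_mul [DecidableEq n] {W : Matrix n n ℝ} {G : Matrix k n ℝ}
    (hW : Wᵀ = W) (hD : IsUnit (G * W * Gᵀ).det) :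
    (1 - orthProj W G)ᵀ * W * (1 - orthProj W G) = W - W * orthProj W G := by
  set Q := orthProj W G
  calc (1 - Q)ᵀ * W * (1 - Q) = (W - Qᵀ * W) * (1 - Q) := by
        rw [transpose_sub, transpose_one, Matrix.sub_mul, Matrix.one_mul]
    _ = W - W * Q - (W * Q - W * (Q * Q)) := by
        rw [transpose_orthProj_mul hW]
        noncomm_ring
    _ = W - W * Q := by rw [orthProj_mul_self hD, sub_self, sub_zero]

end OrthProj

section SchurQuad

variable {a b c s : ℕ} {W : Matrix (Fin s) (Fin s) ℝ} {P : Matrix (Fin a) (Fin s) ℝ}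
  {U : Matrix (Fin b) (Fin s) ℝ} {G : Matrix (Fin c) (Fin s) ℝ}

lemma schurQuad_eq (hW : Wᵀ = W) (hD : IsUnit (G * W * Gᵀ).det) (ψ : Fin a → ℝ)
    (v : Fin b → ℝ) :
    schurQuad W P U G ψ v =
      ((1 - orthProj W G) *ᵥ (Pᵀ *ᵥ ψ + Uᵀ *ᵥ v)) ⬝ᵥ
        (W *ᵥ ((1 - orthProj W G) *ᵥ (Pᵀ *ᵥ ψ + Uᵀ *ᵥ v))) := by
  have hS : (W - W * orthProj W G)ᵀ = W - W * orthProj W G := by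
    rw [transpose_sub, transpose_mul, hW, transpose_orthProj_mul hW]
  rw [← transpose_transpose (1 - orthProj W G), transpose_mulVec_dotProduct, mulVec_mulVec,
    mulVec_mulVec, transpose_transpose, transpose_one_sub_orthProj_mul_mul hW hD,
    dotProduct_mulVec_transpose_add hS]
  simp only [schurQuad, orthProj, Matrix.mul_sub, Matrix.sub_mul, Matrix.mul_assoc]

lemma schurQuad_nonneg (hW : W.PosSemidef) (hD : IsUnit (G * W * Gᵀ).det) (ψ : Fin a → ℝ)
    (v : Fin b → ℝ) : 0 ≤ schurQuad W P U G ψ v := by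
  rw [schurQuad_eq (by simpa using hW.1.eq) hD]
  exact hW.dotProduct_mulVec_nonneg' _

lemma schurQuad_pos (hW : W.PosDef) (hD : IsUnit (G * W * Gᵀ).det)
    (hinj : Function.Injective fun t : (Fin a → ℝ) × (Fin b → ℝ) × (Fin c → ℝ) =>
      Pᵀ *ᵥ t.1 + Uᵀ *ᵥ t.2.1 + Gᵀ *ᵥ t.2.2)
    {ψ : Fin a → ℝ} {v : Fin b → ℝ} (hψv : (ψ, v) ≠ 0) : 0 < schurQuad W P U G ψ v := by
  set u := Pᵀ *ᵥ ψ + Uᵀ *ᵥ v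
  set χ := -(((G * W * Gᵀ)⁻¹ * G * W) *ᵥ u)
  have hproj : (1 - orthProj W G) *ᵥ u = Pᵀ *ᵥ ψ + Uᵀ *ᵥ v + Gᵀ *ᵥ χ := by
    rw [sub_mulVec, one_mulVec, sub_eq_add_neg]
    simp only [χ, orthProj, mulVec_neg, mulVec_mulVec, Matrix.mul_assoc]
    rfl
  rw [schurQuad_eq (by simpa using hW.1.eq) hD, hproj]
  refine hW.dotProduct_mulVec_pos_of_injective (x := (ψ, v, χ)) hinj (by simp) fun h => hψv ?_
  rw [Prod.mk_eq_zero, Prod.mk_eq_zero] at h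
  exact Prod.mk_eq_zero.mpr ⟨h.1, h.2.1⟩

end SchurQuad

theorem stmt_18
    -- dimensions of the visible blocks (Darcy pressure, trace ψ, trace φ,
    -- trace ξ = λ, Stokes velocity, structure velocity)
    (np nψ nφ nξ nvf nvs : ℕ)
    -- dimensions of the eliminated blocks (Stokes stress, poroelastic stress,
    -- Darcy velocity, vorticity, rotation)
    (nsf nsp nup ngf ngp : ℕ)
    -- the reduced cell-centered matrix
    (A : Matrix (Fin np ⊕ Fin nψ ⊕ Fin nφ ⊕ Fin nξ ⊕ Fin nvf ⊕ Fin nvs)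
         (Fin np ⊕ Fin nψ ⊕ Fin nφ ⊕ Fin nξ ⊕ Fin nvf ⊕ Fin nvs) ℝ)
    -- the blocks appearing in the decomposition of the quadratic form
    (App : Matrix (Fin np) (Fin np) ℝ) (Aσp : Matrix (Fin np) (Fin nsp) ℝ)
    (Aσσp : Matrix (Fin nsp) (Fin nsp) ℝ)
    (Apγ : Matrix (Fin np) (Fin ngp) ℝ)
    (Aup : Matrix (Fin np) (Fin nup) ℝ) (Aulam : Matrix (Fin nξ) (Fin nup) ℝ)
    (Auu : Matrix (Fin nup) (Fin nup) ℝ)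
    (Cm : Matrix (Fin nψ ⊕ Fin nφ) (Fin nψ ⊕ Fin nφ) ℝ)
    (Aσφ : Matrix (Fin nψ) (Fin nsf) ℝ) (Aσuf : Matrix (Fin nvf) (Fin nsf) ℝ)
    (Aσγf : Matrix (Fin ngf) (Fin nsf) ℝ) (Aσσf : Matrix (Fin nsf) (Fin nsf) ℝ)
    (Aσθ : Matrix (Fin nφ) (Fin nsp) ℝ) (Aσus : Matrix (Fin nvs) (Fin nsp) ℝ)
    (Aσγp : Matrix (Fin ngp) (Fin nsp) ℝ)
    -- (a) A_uu, A_σσ and A_γγ are symmetric positive definite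
    (hAuu : Auu.PosDef) (hAσσf : Aσσf.PosDef) (hAσσp : Aσσp.PosDef)
    (hAγγf : (Aσγf * Aσσf⁻¹ * Aσγfᵀ).PosDef)
    (hAγγp : (Aσγp * Aσσp⁻¹ * Aσγpᵀ).PosDef)
    -- (b) the matrix [[A_σσ, A_σpᵀ],[A_σp, A_pp]] is positive semidefinite
    (hb : (Matrix.fromBlocks Aσσp Aσpᵀ Aσp App).PosSemidef)
    -- (c) C is positive semidefinite
    (hc : Cm.PosSemidef)
    -- (d) (w_p, ξ) ↦ A_upᵀ w_p + A_uλᵀ ξ is injective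
    (hd : Function.Injective fun wξ : (Fin np → ℝ) × (Fin nξ → ℝ) =>
      Aupᵀ *ᵥ wξ.1 + Aulamᵀ *ᵥ wξ.2)
    -- (e) the maps (ψ, v_f, χ_f) ↦ A_σφᵀψ + A_σuᵀv_f + A_σγᵀχ_f and its
    -- poroelastic analogue are injective
    (hef : Function.Injective fun t : (Fin nψ → ℝ) × (Fin nvf → ℝ) × (Fin ngf → ℝ) =>
      Aσφᵀ *ᵥ t.1 + Aσufᵀ *ᵥ t.2.1 + Aσγfᵀ *ᵥ t.2.2)
    (hep : Function.Injective fun t : (Fin nφ → ℝ) × (Fin nvs → ℝ) × (Fin ngp → ℝ) =>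
      Aσθᵀ *ᵥ t.1 + Aσusᵀ *ᵥ t.2.1 + Aσγpᵀ *ᵥ t.2.2)
    -- the decomposition of the quadratic form of A
    (hdecomp : ∀ (w : Fin np → ℝ) (ψ : Fin nψ → ℝ) (φ : Fin nφ → ℝ)
        (ξ : Fin nξ → ℝ) (vf : Fin nvf → ℝ) (vs : Fin nvs → ℝ),
      (Sum.elim w (Sum.elim ψ (Sum.elim φ (Sum.elim ξ (Sum.elim vf vs))))) ⬝ᵥ
        (A *ᵥ Sum.elim w (Sum.elim ψ (Sum.elim φ (Sum.elim ξ (Sum.elim vf vs)))))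
      = w ⬝ᵥ ((App - Aσp * Aσσp⁻¹ * Aσpᵀ) *ᵥ w)
        + w ⬝ᵥ ((Apγ * (Aσγp * Aσσp⁻¹ * Aσγpᵀ)⁻¹ * Apγᵀ) *ᵥ w)
        + (Aupᵀ *ᵥ w + Aulamᵀ *ᵥ ξ) ⬝ᵥ (Auu⁻¹ *ᵥ (Aupᵀ *ᵥ w + Aulamᵀ *ᵥ ξ))
        + (Sum.elim ψ φ) ⬝ᵥ (Cm *ᵥ Sum.elim ψ φ)
        + schurQuad Aσσf⁻¹ Aσφ Aσuf Aσγf ψ vf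
        + schurQuad Aσσp⁻¹ Aσθ Aσus Aσγp φ vs) :
    -- A is positive definite
    ∀ q : Fin np ⊕ Fin nψ ⊕ Fin nφ ⊕ Fin nξ ⊕ Fin nvf ⊕ Fin nvs → ℝ,
      q ≠ 0 → 0 < q ⬝ᵥ (A *ᵥ q) := by
  intro q hq
  obtain ⟨w, ψ, φ, ξ, vf, vs, rfl⟩ : ∃ w ψ φ ξ vf vs,
      q = Sum.elim w (Sum.elim ψ (Sum.elim φ (Sum.elim ξ (Sum.elim vf vs)))) :=
    ⟨fun i => q (.inl i), fun i => q (.inr (.inl i)), fun i => q (.inr (.inr (.inl i))),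
      fun i => q (.inr (.inr (.inr (.inl i)))), fun i => q (.inr (.inr (.inr (.inr (.inl i))))),
      fun i => q (.inr (.inr (.inr (.inr (.inr i))))), by ext (_ | _ | _ | _ | _ | _) <;> rfl⟩
  have hDf : IsUnit (Aσγf * Aσσf⁻¹ * Aσγfᵀ).det := hAγγf.det_pos.ne'.isUnit
  have hDp : IsUnit (Aσγp * Aσσp⁻¹ * Aσγpᵀ).det := hAγγp.det_pos.ne'.isUnit
  have hpressure := (hb.sub_mul_inv_mul_transpose_of_fromBlocks hAσσp).dotProduct_mulVec_nonneg' w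
  have hrotation :=
    (hAγγp.inv.posSemidef.mul_mul_transpose_same Apγ).dotProduct_mulVec_nonneg' w
  have hvelocity :=
    hAuu.inv.posSemidef.dotProduct_mulVec_nonneg' (Aupᵀ *ᵥ w + Aulamᵀ *ᵥ ξ)
  have htraces := hc.dotProduct_mulVec_nonneg' (Sum.elim ψ φ)
  have hfluid := schurQuad_nonneg (P := Aσφ) (U := Aσuf) hAσσf.inv.posSemidef hDf ψ vf
  have hporo := schurQuad_nonneg (P := Aσθ) (U := Aσus) hAσσp.inv.posSemidef hDp φ vs
  rw [hdecomp]
  obtain h | h | h : (w, ξ) ≠ 0 ∨ (ψ, vf) ≠ 0 ∨ (φ, vs) ≠ 0 := by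
    by_contra! h
    obtain ⟨⟨rfl, rfl⟩, ⟨rfl, rfl⟩, rfl, rfl⟩ := h
    exact hq (by simp only [Sum.elim_zero_zero])
  · linarith [hAuu.inv.dotProduct_mulVec_pos_of_injective hd (by simp) h]
  · linarith [schurQuad_pos hAσσf.inv hDf hef h]
  · linarith [schurQuad_pos hAσσp.inv hDp hep h]
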